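/- Risk-difference identity for shrinkage estimation (single population): let X ~ NM(r, p) on (ℕ₀)^m with r ≥ 1, let δ : ℕ₀ → (0, ∞), and define the shrinkage estimator p̂_i^δ = X_i/(r + X_· − 1 + δ(X_·)) and the unbiased estimator p̂_i^U = X_i/(r + X_· − 1), with 0/0 = 0. Then for weights c_1, ..., c_m ≥ 0, the difference of standardized squared error risks satisfies E[ Σ_i c_i (p̂_i^δ − p_i)²/p_i ] − E[ Σ_i c_i (p̂_i^U − p_i)²/p_i ] = E[ Σ_i c_i ((X_i + 1)/(r + X_·)) · ( {δ(X_· + 1)/(r + X_· + δ(X_· + 1))}² − 2 δ(X_· + 1)/(r + X_· + δ(X_· + 1)) ) + 2 Σ_i c_i (X_i/(r + X_· − 1)) · δ(X_·)/(r + X_· − 1 + δ(X_·)) ], provided both risks are finite. -/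

import Mathlib

/-!
Pointwise, `p̂Uᵢ - p̂δᵢ = p̂Uᵢ · w` with `w = δ(X·)/(r + X· - 1 + δ(X·))`, so the difference of
the two losses is `∑ i, cᵢ (p̂δᵢ² - p̂Uᵢ²)/pᵢ` plus the cross term `2 ∑ i, cᵢ p̂Uᵢ · w`.
The first part vanishes where `Xᵢ = 0`, so Hudson's identity
`E[φ(X)/pᵢ] = E[(r + X·)/(Xᵢ + 1) φ(X + eᵢ)]` removes the unknown `pᵢ`; it is the shift rule
`f(x + eᵢ) = (r + x·) pᵢ/(xᵢ + 1) f(x)` for the negative multinomial pmf `f`, combined with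
reindexing the sum along `x ↦ x + eᵢ`. Every piece is summable because
`0 ≤ p̂δᵢ ≤ p̂Uᵢ ≤ 1` and `f` is summable (its mass on `{x· = n}` is a negative binomial term).
-/

open Finset Function Filter Topology

noncomputable section

variable {ι : Type*} [Fintype ι]

theorem Summable.mul_of_abs_le {α : Type*} {φ q : α → ℝ} {C : ℝ} (hq : Summable q)
    (hq0 : ∀ x, 0 ≤ q x) (hφ : ∀ x, |φ x| ≤ C) : Summable fun x => φ x * q x :=
  (hq.mul_left C).of_norm_bounded fun x => by
    rw [Real.norm_eq_abs, abs_mul, abs_of_nonneg (hq0 x)]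
    exact mul_le_mul_of_nonneg_right (hφ x) (hq0 x)

theorem tsum_sub_tsum_eq_of_hasSum_transfer {α κ : Type*} [Fintype κ] {f g R G : α → ℝ}
    {F H : κ → α → ℝ} (hf : Summable f) (hg : Summable g)
    (hfg : ∀ x, f x - g x = ∑ k, F k x + G x) (hR : ∀ x, R x = ∑ k, H k x + G x)
    (hF : ∀ k, Summable (F k)) (hG : Summable G)
    (hFH : ∀ k a, HasSum (F k) a → HasSum (H k) a) :
    ∑' x, f x - ∑' x, g x = ∑' x, R x := by
  have hRsum : HasSum R (∑ k, ∑' x, F k x + ∑' x, G x) := by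
    convert (hasSum_sum fun k _ => hFH k _ (hF k).hasSum).add hG.hasSum using 1
    exact funext hR
  rw [hRsum.tsum_eq, ← hf.tsum_sub hg, tsum_congr hfg, (summable_sum fun k _ => hF k).tsum_add hG,
    Summable.tsum_finsetSum fun k _ => hF k]

@[to_additive]
theorem prod_apply_update {α M : Type*} [CommMonoid M] [DecidableEq ι] (g : ι → α → M)
    (x : ι → α) (i : ι) (v : α) :
    ∏ j, g j (update x i v j) = g i v * ∏ j ∈ univ.erase i, g j (x j) := by
  rw [← mul_prod_erase univ _ (mem_univ i), update_self]
  exact congrArg _ (prod_congr rfl fun j hj => by rw [update_of_ne (ne_of_mem_erase hj)])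

theorem sum_update_succ [DecidableEq ι] (x : ι → ℕ) (i : ι) :
    ∑ j, update x i (x i + 1) j = ∑ j, x j + 1 := by
  rw [sum_apply_update (fun _ n => n), ← add_sum_erase _ _ (mem_univ i)]
  ring

theorem sum_cast_update_succ [DecidableEq ι] (x : ι → ℕ) (i : ι) :
    ∑ j, (update x i (x i + 1) j : ℝ) = ∑ j, (x j : ℝ) + 1 := by
  exact_mod_cast sum_update_succ x i

theorem summable_gamma_div_mul_pow {r P : ℝ} (hr : 0 < r) (hP : 0 ≤ P) (hP1 : P < 1) :
    Summable fun n : ℕ => Real.Gamma (r + n) / (Real.Gamma r * n.factorial) * P ^ n := by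
  set a := fun n : ℕ => Real.Gamma (r + n) / (Real.Gamma r * n.factorial) * P ^ n
  have ha_succ (n : ℕ) : a (n + 1) = (r + n) * P / (n + 1) * a n := by
    have hrn : r + n ≠ 0 := by positivity
    simp only [a]
    rw [Nat.cast_succ, ← add_assoc, Real.Gamma_add_one hrn, Nat.factorial_succ]
    push_cast
    field_simp
    ring
  have hratio : Tendsto (fun n : ℕ => (r + n) * P / (n + 1)) atTop (𝓝 P) := by
    have h := (((tendsto_one_div_add_atTop_nhds_zero_nat (𝕜 := ℝ)).const_mul (r - 1)).add_const
      1).mul_const P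
    rw [mul_zero, zero_add, one_mul] at h
    refine h.congr fun n => ?_
    field_simp
    ring
  obtain ⟨q, hPq, hq1⟩ := exists_between hP1
  refine summable_of_ratio_norm_eventually_le hq1 ?_
  filter_upwards [hratio.eventually (ge_mem_nhds hPq)] with n hn
  rw [ha_succ, norm_mul, Real.norm_of_nonneg (by positivity)]
  exact mul_le_mul_of_nonneg_right hn (norm_nonneg _)

def negMultinomialPMF (r : ℝ) (p : ι → ℝ) (x : ι → ℕ) : ℝ :=
  Real.Gamma (r + ∑ j, (x j : ℝ)) / (Real.Gamma r * ∏ j, (Nat.factorial (x j) : ℝ)) *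
    (1 - ∑ j, p j) ^ r * ∏ j, p j ^ x j

theorem negMultinomialPMF_nonneg {r : ℝ} {p : ι → ℝ} (hr : 0 < r) (hp : ∀ i, 0 ≤ p i)
    (hps : ∑ i, p i ≤ 1) (x : ι → ℕ) : 0 ≤ negMultinomialPMF r p x := by
  have : 0 ≤ 1 - ∑ i, p i := by linarith
  unfold negMultinomialPMF
  have : 0 < Real.Gamma (r + ∑ j, (x j : ℝ)) := Real.Gamma_pos_of_pos (by positivity)
  have : 0 < Real.Gamma r := Real.Gamma_pos_of_pos hr
  have : 0 ≤ ∏ j, p j ^ x j := prod_nonneg fun j _ => pow_nonneg (hp j) _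
  positivity

theorem sum_piAntidiag_negMultinomialPMF [DecidableEq ι] (r : ℝ) (p : ι → ℝ) (n : ℕ) :
    ∑ x ∈ univ.piAntidiag n, negMultinomialPMF r p x =
      Real.Gamma (r + n) / (Real.Gamma r * n.factorial) * (∑ i, p i) ^ n * (1 - ∑ i, p i) ^ r := by
  rw [sum_pow_eq_sum_piAntidiag, mul_sum, sum_mul]
  refine sum_congr rfl fun x hx => ?_
  have htot : ∑ j, x j = n := (mem_piAntidiag.mp hx).1
  have hfact : (n.factorial : ℝ) = (∏ j, ((x j).factorial : ℝ)) * Nat.multinomial univ x := by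
    rw [← htot]; exact_mod_cast (Nat.multinomial_spec univ x).symm
  have hM : (Nat.multinomial univ x : ℝ) ≠ 0 := mod_cast (Nat.multinomial_pos _ _).ne'
  have : (∏ j, ((x j).factorial : ℝ)) ≠ 0 := by positivity
  unfold negMultinomialPMF
  rw [← Nat.cast_sum, htot, hfact]
  field_simp

theorem summable_negMultinomialPMF {r : ℝ} {p : ι → ℝ} (hr : 0 < r) (hp : ∀ i, 0 ≤ p i)
    (hps : ∑ i, p i < 1) : Summable (negMultinomialPMF r p) := by
  classical
  set b := fun n : ℕ =>
    Real.Gamma (r + n) / (Real.Gamma r * n.factorial) * (∑ i, p i) ^ n * (1 - ∑ i, p i) ^ r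
  have hb : Summable b :=
    (summable_gamma_div_mul_pow hr (sum_nonneg fun i _ => hp i) hps).mul_right _
  refine summable_of_sum_le (c := ∑' n, b n) (negMultinomialPMF_nonneg hr hp hps.le) fun u => ?_
  calc ∑ x ∈ u, negMultinomialPMF r p x
      = ∑ n ∈ u.image (fun x => ∑ j, x j), ∑ x ∈ u with ∑ j, x j = n, negMultinomialPMF r p x :=
        (sum_fiberwise_of_maps_to (fun x hx => mem_image_of_mem _ hx) _).symm
    _ ≤ ∑ n ∈ u.image (fun x => ∑ j, x j), ∑ x ∈ univ.piAntidiag n, negMultinomialPMF r p x := by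
        refine sum_le_sum fun n _ => sum_le_sum_of_subset_of_nonneg (fun x hx => ?_)
          fun x _ _ => negMultinomialPMF_nonneg hr hp hps.le x
        simp only [mem_filter] at hx
        simp [mem_piAntidiag, hx.2]
    _ ≤ _ := by
        simp_rw [sum_piAntidiag_negMultinomialPMF]
        have hq : 0 ≤ 1 - ∑ i, p i := by linarith
        refine hb.sum_le_tsum _ fun n _ => ?_
        have : 0 < Real.Gamma r := Real.Gamma_pos_of_pos hr
        have : 0 < Real.Gamma (r + n) := Real.Gamma_pos_of_pos (by positivity)
        have := sum_nonneg fun i (_ : i ∈ univ) => hp i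
        positivity

theorem negMultinomialPMF_update_succ [DecidableEq ι] {r : ℝ} (hr : 0 < r) (p : ι → ℝ)
    (x : ι → ℕ) (i : ι) :
    negMultinomialPMF r p (update x i (x i + 1)) =
      (r + ∑ j, (x j : ℝ)) * p i / (x i + 1) * negMultinomialPMF r p x := by
  have hrS : r + ∑ j, (x j : ℝ) ≠ 0 := by positivity
  have hΓ : Real.Gamma (r + (∑ j, (x j : ℝ) + 1)) =
      (r + ∑ j, (x j : ℝ)) * Real.Gamma (r + ∑ j, (x j : ℝ)) := by
    rw [← add_assoc, Real.Gamma_add_one hrS]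
  have : 0 < Real.Gamma r := Real.Gamma_pos_of_pos hr
  have : ∏ j ∈ univ.erase i, ((x j).factorial : ℝ) ≠ 0 := by positivity
  unfold negMultinomialPMF
  rw [sum_cast_update_succ, hΓ, prod_apply_update (fun _ (n : ℕ) => (n.factorial : ℝ)),
    prod_apply_update (fun j (n : ℕ) => p j ^ n), ← mul_prod_erase _ _ (mem_univ i),
    ← mul_prod_erase _ (fun j => p j ^ x j) (mem_univ i), Nat.factorial_succ, pow_succ]
  push_cast
  field_simp

theorem hasSum_div_mul_negMultinomialPMF_iff [DecidableEq ι] {r : ℝ} (hr : 0 < r)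
    {p : ι → ℝ} {i : ι} (hpi : p i ≠ 0) {φ : (ι → ℕ) → ℝ} (hφ : ∀ x, x i = 0 → φ x = 0) {a : ℝ} :
    HasSum (fun x => (r + ∑ j, (x j : ℝ)) / (x i + 1) * φ (update x i (x i + 1)) *
        negMultinomialPMF r p x) a ↔
      HasSum (fun x => φ x / p i * negMultinomialPMF r p x) a := by
  have hinj : Injective fun x : ι → ℕ => update x i (x i + 1) :=
    LeftInverse.injective (g := fun y => update y i (y i - 1)) fun x => by simp
  have hrange : ∀ y ∉ Set.range fun x : ι → ℕ => update x i (x i + 1),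
      φ y / p i * negMultinomialPMF r p y = 0 := by
    intro y hy
    have hyi : y i = 0 := by
      by_contra h
      exact hy ⟨update y i (y i - 1), by simp [Nat.sub_add_cancel (Nat.one_le_iff_ne_zero.mpr h)]⟩
    simp [hφ y hyi]
  rw [← hinj.hasSum_iff hrange]
  refine iff_of_eq (congrArg (HasSum · a) (funext fun x => ?_))
  have : (x i : ℝ) + 1 ≠ 0 := by positivity
  simp only [comp_apply, negMultinomialPMF_update_succ hr]
  field_simp

def shrinkageEstimator (r : ℝ) (δ : ℕ → ℝ) (x : ι → ℕ) (i : ι) : ℝ :=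
  x i / (r + ∑ j, (x j : ℝ) - 1 + δ (∑ j, x j))

def unbiasedEstimator (r : ℝ) (x : ι → ℕ) (i : ι) : ℝ :=
  x i / (r + ∑ j, (x j : ℝ) - 1)

def shrinkageWeight (r : ℝ) (δ : ℕ → ℝ) (x : ι → ℕ) : ℝ :=
  δ (∑ j, x j) / (r + ∑ j, (x j : ℝ) - 1 + δ (∑ j, x j))

def standardizedLoss (c p d : ι → ℝ) : ℝ :=
  ∑ i, c i * (d i - p i) ^ 2 / p i

section Estimators

variable {r : ℝ} {δ : ℕ → ℝ} {x : ι → ℕ}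

theorem cast_le_add_sum_sub_one (hr : 1 ≤ r) (i : ι) :
    (x i : ℝ) ≤ r + ∑ j, (x j : ℝ) - 1 := by
  have := single_le_sum (fun j _ => (x j).cast_nonneg (α := ℝ)) (mem_univ i)
  linarith

theorem unbiasedEstimator_nonneg (hr : 1 ≤ r) (i : ι) : 0 ≤ unbiasedEstimator r x i :=
  div_nonneg (Nat.cast_nonneg _) ((Nat.cast_nonneg _).trans (cast_le_add_sum_sub_one hr i))

theorem unbiasedEstimator_le_one (hr : 1 ≤ r) (i : ι) : unbiasedEstimator r x i ≤ 1 :=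
  div_le_one_of_le₀ (cast_le_add_sum_sub_one hr i)
    ((Nat.cast_nonneg _).trans (cast_le_add_sum_sub_one hr i))

theorem shrinkageWeight_nonneg (hr : 1 ≤ r) (hδ : 0 ≤ δ (∑ j, x j)) :
    0 ≤ shrinkageWeight r δ x := by
  have := sum_nonneg fun j (_ : j ∈ univ) => (x j).cast_nonneg (α := ℝ)
  unfold shrinkageWeight
  apply div_nonneg hδ
  linarith

theorem shrinkageWeight_le_one (hr : 1 ≤ r) (hδ : 0 ≤ δ (∑ j, x j)) :
    shrinkageWeight r δ x ≤ 1 := by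
  have := sum_nonneg fun j (_ : j ∈ univ) => (x j).cast_nonneg (α := ℝ)
  exact div_le_one_of_le₀ (by linarith) (by linarith)

theorem unbiasedEstimator_sub_shrinkageEstimator (hr : 1 ≤ r) (hδ : 0 < δ (∑ j, x j))
    (i : ι) :
    unbiasedEstimator r x i - shrinkageEstimator r δ x i =
      unbiasedEstimator r x i * shrinkageWeight r δ x := by
  have hxi := cast_le_add_sum_sub_one (x := x) hr i
  unfold unbiasedEstimator shrinkageEstimator shrinkageWeight
  rcases (Nat.cast_nonneg (x i)).trans hxi |>.eq_or_lt with hA | hA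
  · -- `r + ∑ j, x j - 1 = 0` forces `x i = 0`, and both sides are `0` since `a / 0 = 0`
    simp [← hA, show (x i : ℝ) = 0 by linarith [(x i).cast_nonneg (α := ℝ)]]
  · have : r + ∑ j, (x j : ℝ) - 1 + δ (∑ j, x j) ≠ 0 := by linarith
    field_simp
    ring

theorem abs_sq_shrinkageEstimator_sub_sq_le_one (hr : 1 ≤ r) (hδ : 0 < δ (∑ j, x j))
    (i : ι) :
    |shrinkageEstimator r δ x i ^ 2 - unbiasedEstimator r x i ^ 2| ≤ 1 := by
  have h := unbiasedEstimator_sub_shrinkageEstimator hr hδ i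
  have hU0 := unbiasedEstimator_nonneg (x := x) hr i
  have hU1 := unbiasedEstimator_le_one (x := x) hr i
  have hw0 := shrinkageWeight_nonneg hr hδ.le
  have hw1 := shrinkageWeight_le_one hr hδ.le
  have hS0 : 0 ≤ shrinkageEstimator r δ x i := by nlinarith
  have hSU : shrinkageEstimator r δ x i ≤ unbiasedEstimator r x i := by nlinarith
  rw [abs_sub_comm, abs_of_nonneg (by nlinarith)]
  nlinarith

theorem abs_sum_unbiasedEstimator_mul_shrinkageWeight_le {c : ι → ℝ} (hc : ∀ i, 0 ≤ c i)
    (hr : 1 ≤ r) (hδ : 0 < δ (∑ j, x j)) :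
    |∑ i, c i * unbiasedEstimator r x i * shrinkageWeight r δ x| ≤ ∑ i, c i := by
  have hw0 := shrinkageWeight_nonneg hr hδ.le
  have hw1 := shrinkageWeight_le_one hr hδ.le
  have hterm (i : ι) : 0 ≤ c i * unbiasedEstimator r x i * shrinkageWeight r δ x ∧
      c i * unbiasedEstimator r x i * shrinkageWeight r δ x ≤ c i := by
    have := unbiasedEstimator_nonneg (x := x) hr i
    have := unbiasedEstimator_le_one (x := x) hr i
    have := hc i
    constructor
    · positivity
    · calc _ ≤ c i * 1 * 1 := by gcongr
        _ = c i := by ring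
  rw [abs_of_nonneg (sum_nonneg fun i _ => (hterm i).1)]
  exact sum_le_sum fun i _ => (hterm i).2

end Estimators

section Risk

variable {r : ℝ} {δ : ℕ → ℝ} {c p : ι → ℝ}

theorem standardizedLoss_shrinkage_sub_unbiased_mul (hr : 1 ≤ r) (hp : ∀ i, p i ≠ 0)
    {x : ι → ℕ} (hδ : 0 < δ (∑ j, x j)) (q : ℝ) :
    standardizedLoss c p (shrinkageEstimator r δ x) * q -
        standardizedLoss c p (unbiasedEstimator r x) * q =
      ∑ i, c i * (shrinkageEstimator r δ x i ^ 2 - unbiasedEstimator r x i ^ 2) / p i * q +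
        (2 * ∑ i, c i * unbiasedEstimator r x i * shrinkageWeight r δ x) * q := by
  rw [← sub_mul, ← sum_mul, ← add_mul, standardizedLoss, standardizedLoss, ← sum_sub_distrib,
    mul_sum, ← sum_add_distrib]
  congr 1
  refine sum_congr rfl fun i _ => ?_
  rw [mul_assoc (c i), ← unbiasedEstimator_sub_shrinkageEstimator hr hδ i]
  field_simp [hp i]
  ring

theorem shrinkageEstimator_update_succ [DecidableEq ι] (x : ι → ℕ) (i : ι) :
    shrinkageEstimator r δ (update x i (x i + 1)) i =
      ((x i : ℝ) + 1) / (r + ∑ j, (x j : ℝ) + δ (∑ j, x j + 1)) := by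
  rw [shrinkageEstimator, sum_cast_update_succ, sum_update_succ, update_self]
  push_cast
  ring_nf

theorem unbiasedEstimator_update_succ [DecidableEq ι] (x : ι → ℕ) (i : ι) :
    unbiasedEstimator r (update x i (x i + 1)) i =
      ((x i : ℝ) + 1) / (r + ∑ j, (x j : ℝ)) := by
  rw [unbiasedEstimator, sum_cast_update_succ, update_self]
  push_cast
  ring_nf

theorem hasSum_sq_shrinkage_sub_sq_unbiased_iff [DecidableEq ι] (hr : 0 < r)
    (hδ : ∀ n, 0 ≤ δ n) {i : ι} (hpi : p i ≠ 0) {a : ℝ} :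
    HasSum (fun x => c i * (((x i : ℝ) + 1) / (r + ∑ j, (x j : ℝ))) *
        ((δ (∑ j, x j + 1) / (r + ∑ j, (x j : ℝ) + δ (∑ j, x j + 1))) ^ 2
          - 2 * (δ (∑ j, x j + 1) / (r + ∑ j, (x j : ℝ) + δ (∑ j, x j + 1)))) *
        negMultinomialPMF r p x) a ↔
      HasSum (fun x => c i * (shrinkageEstimator r δ x i ^ 2 - unbiasedEstimator r x i ^ 2) /
        p i * negMultinomialPMF r p x) a := by
  refine Iff.trans (iff_of_eq (congrArg (HasSum · a) (funext fun x => ?_)))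
    (hasSum_div_mul_negMultinomialPMF_iff hr hpi (φ := fun x =>
      c i * (shrinkageEstimator r δ x i ^ 2 - unbiasedEstimator r x i ^ 2)) fun x hx => by
        simp [shrinkageEstimator, unbiasedEstimator, hx])
  have : r + ∑ j, (x j : ℝ) ≠ 0 := by positivity
  have : r + ∑ j, (x j : ℝ) + δ (∑ j, x j + 1) ≠ 0 := by
    have := hδ (∑ j, x j + 1)
    positivity
  have : (x i : ℝ) + 1 ≠ 0 := by positivity
  rw [shrinkageEstimator_update_succ, unbiasedEstimator_update_succ]
  field_simp
  ring

end Risk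

end

theorem negMultinomial_risk_difference_general (m : ℕ) (r : ℝ) (hr : 1 ≤ r)
    (p : Fin m → ℝ) (hp : ∀ i, 0 < p i) (hps : ∑ i, p i < 1)
    (δ : ℕ → ℝ) (hδ : ∀ n, 0 < δ n) (c : Fin m → ℝ) (hc : ∀ i, 0 ≤ c i)
    (pmf : (Fin m → ℕ) → ℝ)
    (hpmf : ∀ x : Fin m → ℕ,
      pmf x = Real.Gamma (r + ∑ j, (x j : ℝ)) / (Real.Gamma r * ∏ j, (Nat.factorial (x j) : ℝ)) *
        (1 - ∑ j, p j) ^ r * ∏ j, p j ^ x j)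
    (hsumδ : Summable (fun x : Fin m → ℕ =>
      (∑ i, c i * ((x i : ℝ) / (r + ∑ j, (x j : ℝ) - 1 + δ (∑ j, x j)) - p i) ^ 2 / p i) * pmf x))
    (hsumU : Summable (fun x : Fin m → ℕ =>
      (∑ i, c i * ((x i : ℝ) / (r + ∑ j, (x j : ℝ) - 1) - p i) ^ 2 / p i) * pmf x)) :
    (∑' x : Fin m → ℕ,
        (∑ i, c i * ((x i : ℝ) / (r + ∑ j, (x j : ℝ) - 1 + δ (∑ j, x j)) - p i) ^ 2 / p i) * pmf x)
      - (∑' x : Fin m → ℕ,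
          (∑ i, c i * ((x i : ℝ) / (r + ∑ j, (x j : ℝ) - 1) - p i) ^ 2 / p i) * pmf x)
      = ∑' x : Fin m → ℕ,
          ((∑ i, c i * (((x i : ℝ) + 1) / (r + ∑ j, (x j : ℝ))) *
              ((δ (∑ j, x j + 1) / (r + ∑ j, (x j : ℝ) + δ (∑ j, x j + 1))) ^ 2
                - 2 * (δ (∑ j, x j + 1) / (r + ∑ j, (x j : ℝ) + δ (∑ j, x j + 1)))))
            + 2 * ∑ i, c i * ((x i : ℝ) / (r + ∑ j, (x j : ℝ) - 1)) *
                (δ (∑ j, x j) / (r + ∑ j, (x j : ℝ) - 1 + δ (∑ j, x j)))) * pmf x := by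
  obtain rfl : pmf = negMultinomialPMF r p := funext hpmf
  have hr0 : 0 < r := by linarith
  have hpmf0 := negMultinomialPMF_nonneg hr0 (fun i => (hp i).le) hps.le
  have hq := summable_negMultinomialPMF hr0 (fun i => (hp i).le) hps
  refine tsum_sub_tsum_eq_of_hasSum_transfer hsumδ hsumU
    (fun x => standardizedLoss_shrinkage_sub_unbiased_mul hr (fun i => (hp i).ne') (hδ _) _)
    (fun x => by rw [add_mul, sum_mul]; rfl)
    (fun i => hq.mul_of_abs_le (C := c i / p i) hpmf0 fun x => ?_)
    (hq.mul_of_abs_le (C := 2 * ∑ i, c i) hpmf0 fun x => ?_)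
    fun i _ => (hasSum_sq_shrinkage_sub_sq_unbiased_iff hr0 (fun n => (hδ n).le) (hp i).ne').mpr
  · rw [abs_div, abs_mul, abs_of_nonneg (hc i), abs_of_pos (hp i)]
    exact div_le_div_of_nonneg_right
      (mul_le_of_le_one_right (hc i) (abs_sq_shrinkageEstimator_sub_sq_le_one hr (hδ _) i))
      (hp i).le
  · rw [abs_mul, abs_two]
    gcongr
    exact abs_sum_unbiasedEstimator_mul_shrinkageWeight_le hc hr (hδ _)

/-- Risk-difference identity for shrinkage estimation based on a single negative multinomial
observation: the difference of standardized squared error risks of the shrinkage estimator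
`X i / (r + X_· - 1 + δ(X_·))` and the unbiased estimator `X i / (r + X_· - 1)` (with `0/0 = 0`)
equals the stated expectation, provided both risks are finite. -/
theorem negMultinomial_risk_difference (m : ℕ) (hm : 1 ≤ m) (r : ℝ) (hr : 1 ≤ r)
    (p : Fin m → ℝ) (hp : ∀ i, 0 < p i) (hps : ∑ i, p i < 1)
    (δ : ℕ → ℝ) (hδ : ∀ n, 0 < δ n) (c : Fin m → ℝ) (hc : ∀ i, 0 ≤ c i)
    (pmf : (Fin m → ℕ) → ℝ)
    (hpmf : ∀ x : Fin m → ℕ,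
      pmf x = Real.Gamma (r + ∑ j, (x j : ℝ)) / (Real.Gamma r * ∏ j, (Nat.factorial (x j) : ℝ)) *
        (1 - ∑ j, p j) ^ r * ∏ j, p j ^ x j)
    (hsumδ : Summable (fun x : Fin m → ℕ =>
      (∑ i, c i * ((x i : ℝ) / (r + ∑ j, (x j : ℝ) - 1 + δ (∑ j, x j)) - p i) ^ 2 / p i) * pmf x))
    (hsumU : Summable (fun x : Fin m → ℕ =>
      (∑ i, c i * ((x i : ℝ) / (r + ∑ j, (x j : ℝ) - 1) - p i) ^ 2 / p i) * pmf x)) :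
    (∑' x : Fin m → ℕ,
        (∑ i, c i * ((x i : ℝ) / (r + ∑ j, (x j : ℝ) - 1 + δ (∑ j, x j)) - p i) ^ 2 / p i) * pmf x)
      - (∑' x : Fin m → ℕ,
          (∑ i, c i * ((x i : ℝ) / (r + ∑ j, (x j : ℝ) - 1) - p i) ^ 2 / p i) * pmf x)
      = ∑' x : Fin m → ℕ,
          ((∑ i, c i * (((x i : ℝ) + 1) / (r + ∑ j, (x j : ℝ))) *
              ((δ (∑ j, x j + 1) / (r + ∑ j, (x j : ℝ) + δ (∑ j, x j + 1))) ^ 2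
                - 2 * (δ (∑ j, x j + 1) / (r + ∑ j, (x j : ℝ) + δ (∑ j, x j + 1)))))
            + 2 * ∑ i, c i * ((x i : ℝ) / (r + ∑ j, (x j : ℝ) - 1)) *
                (δ (∑ j, x j) / (r + ∑ j, (x j : ℝ) - 1 + δ (∑ j, x j)))) * pmf x :=
  negMultinomial_risk_difference_general m r hr p hp hps δ hδ c hc pmf hpmf hsumδ hsumU
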